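/- arXiv:1808.05869 — 2 statements merged into one kernel-verified Lean document; each statement's English description precedes it below -/
import Mathlib

section
/- Let N be a natural number, let 0 = τ₀ < τ₁ < ... < τ_{N+1} be switch times, and let (vᵢ, ωᵢ) ∈ ℝ² for i = 0, ..., N be velocity pairs. Let x = (x₁, x₂, ψ) : ℝ → ℝ³ be continuous with x(0) = x₀, differentiable on each open interval (τᵢ, τᵢ₊₁), and satisfying the unicycle equations x₁'(t) = vᵢ·cos(ψ(t)), x₂'(t) = vᵢ·sin(ψ(t)), ψ'(t) = ωᵢ for t ∈ (τᵢ, τᵢ₊₁). Let s > 0 and let x_s : ℝ → ℝ³ be continuous with x_s(0) = x₀, differentiable on each interval (τᵢ/s, τᵢ₊₁/s), and satisfying the unicycle equations with velocities (s·vᵢ, s·ωᵢ) on (τᵢ/s, τᵢ₊₁/s). Then x_s(t) = x(s·t) for all t ∈ [0, τ_{N+1}/s]. -/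
/-!
On each switch interval both trajectories solve the unicycle equations with the same constant
velocities `(s vᵢ, s ωᵢ)`: `x_s` by hypothesis, and `t ↦ x(s t)` by the chain rule. These equations
are triangular — `ψ' = ω` is autonomous and the right-hand sides of the position equations depend
only on `ψ` — so equality of the initial states propagates first to the headings and then to the
positions, by the mean value theorem. Induction over the switch times glues the intervals.
-/

open Set

theorem eqOn_Icc_of_hasDerivAt_eq {a b : ℝ} {f g f' : ℝ → ℝ}
    (hf : ContinuousOn f (Icc a b)) (hg : ContinuousOn g (Icc a b))
    (hff' : ∀ t ∈ Ioo a b, HasDerivAt f (f' t) t) (hgf' : ∀ t ∈ Ioo a b, HasDerivAt g (f' t) t)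
    (ha : f a = g a) : EqOn f g (Icc a b) := by
  rintro t ⟨hat, htb⟩
  rcases hat.eq_or_lt with rfl | hat
  · exact ha
  obtain ⟨c, -, hslope⟩ := exists_hasDerivAt_eq_slope (f - g) 0 hat
    ((hf.sub hg).mono (Icc_subset_Icc_right htb))
    fun u hu => by
      have hu' := Ioo_subset_Ioo_right htb hu
      simpa using (hff' u hu').sub (hgf' u hu')
  rw [Pi.zero_apply, Pi.sub_apply, Pi.sub_apply, ha, sub_self, sub_zero, eq_comm,
    div_eq_zero_iff, sub_eq_zero, sub_eq_zero] at hslope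
  exact hslope.resolve_right hat.ne'

theorem eqOn_Icc_last_of_eqOn_Icc_succ {α β : Type*} [LinearOrder α] {n : ℕ}
    {τ : Fin (n + 1) → α} (hτ : Monotone τ) {f g : α → β} (h0 : f (τ 0) = g (τ 0))
    (hstep : ∀ i : Fin n, f (τ i.castSucc) = g (τ i.castSucc) →
      EqOn f g (Icc (τ i.castSucc) (τ i.succ))) :
    EqOn f g (Icc (τ 0) (τ (Fin.last n))) := by
  suffices ∀ k, EqOn f g (Icc (τ 0) (τ k)) from this (Fin.last n)
  intro k
  induction k using Fin.induction with
  | zero => simpa [EqOn] using h0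
  | succ i ih =>
    have hτ0i : τ 0 ≤ τ i.castSucc := hτ (Fin.zero_le _)
    rw [← Icc_union_Icc_eq_Icc hτ0i (hτ Fin.castSucc_lt_succ.le)]
    exact ih.union (hstep i (ih ⟨hτ0i, le_rfl⟩))

def IsUnicycleOn (v ω : ℝ) (x₁ x₂ ψ : ℝ → ℝ) (I : Set ℝ) : Prop :=
  ∀ t ∈ I, HasDerivAt x₁ (v * Real.cos (ψ t)) t ∧ HasDerivAt x₂ (v * Real.sin (ψ t)) t ∧
    HasDerivAt ψ ω t

namespace IsUnicycleOn

variable {v ω : ℝ} {x₁ x₂ ψ : ℝ → ℝ} {I : Set ℝ}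

theorem comp_const_mul (h : IsUnicycleOn v ω x₁ x₂ ψ I) (s : ℝ) :
    IsUnicycleOn (s * v) (s * ω) (fun t => x₁ (s * t)) (fun t => x₂ (s * t)) (fun t => ψ (s * t))
      ((s * ·) ⁻¹' I) := by
  intro t ht
  obtain ⟨h₁, h₂, h₃⟩ := h (s * t) ht
  have hs : HasDerivAt (s * ·) s t := by simpa using (hasDerivAt_id t).const_mul s
  exact ⟨(h₁.comp t hs).congr_deriv (by ring), (h₂.comp t hs).congr_deriv (by ring),
    (h₃.comp t hs).congr_deriv (by ring)⟩

theorem eqOn_Icc {a b : ℝ} {y₁ y₂ φ : ℝ → ℝ} (hx : IsUnicycleOn v ω x₁ x₂ ψ (Ioo a b))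
    (hy : IsUnicycleOn v ω y₁ y₂ φ (Ioo a b))
    (hx₁ : ContinuousOn x₁ (Icc a b)) (hx₂ : ContinuousOn x₂ (Icc a b))
    (hψ : ContinuousOn ψ (Icc a b)) (hy₁ : ContinuousOn y₁ (Icc a b))
    (hy₂ : ContinuousOn y₂ (Icc a b)) (hφ : ContinuousOn φ (Icc a b))
    (ha : (x₁ a, x₂ a, ψ a) = (y₁ a, y₂ a, φ a)) :
    EqOn (fun t => (x₁ t, x₂ t, ψ t)) (fun t => (y₁ t, y₂ t, φ t)) (Icc a b) := by
  simp only [Prod.mk.injEq] at ha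
  obtain ⟨ha₁, ha₂, haψ⟩ := ha
  have hψφ : EqOn ψ φ (Icc a b) :=
    eqOn_Icc_of_hasDerivAt_eq hψ hφ (fun t ht => (hx t ht).2.2) (fun t ht => (hy t ht).2.2) haψ
  have h₁ : EqOn x₁ y₁ (Icc a b) := eqOn_Icc_of_hasDerivAt_eq hx₁ hy₁ (fun t ht => (hx t ht).1)
    (fun t ht => hψφ (Ioo_subset_Icc_self ht) ▸ (hy t ht).1) ha₁
  have h₂ : EqOn x₂ y₂ (Icc a b) := eqOn_Icc_of_hasDerivAt_eq hx₂ hy₂ (fun t ht => (hx t ht).2.1)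
    (fun t ht => hψφ (Ioo_subset_Icc_self ht) ▸ (hy t ht).2.1) ha₂
  intro t ht
  simp only [h₁ ht, h₂ ht, hψφ ht]

end IsUnicycleOn

/-- Theorem 5 of the paper, first conclusion: scaling all commanded velocities
of a piecewise-constant-velocity unicycle trajectory by `s > 0` and all switch
times by `1/s` produces the time-reparametrization `x_s(t) = x(s·t)`. -/
theorem unicycle_scaled_trajectory_eq_reparametrization
    (N : ℕ) (τ : Fin (N + 2) → ℝ) (hτ0 : τ 0 = 0) (hτmono : StrictMono τ)
    (v ω : Fin (N + 1) → ℝ)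
    (x₀ : ℝ × ℝ × ℝ)
    (x₁ x₂ ψ : ℝ → ℝ)
    (hx₁c : Continuous x₁) (hx₂c : Continuous x₂) (hψc : Continuous ψ)
    (hinit : (x₁ 0, x₂ 0, ψ 0) = x₀)
    (hode : ∀ i : Fin (N + 1), ∀ t ∈ Set.Ioo (τ i.castSucc) (τ i.succ),
        HasDerivAt x₁ (v i * Real.cos (ψ t)) t ∧
        HasDerivAt x₂ (v i * Real.sin (ψ t)) t ∧
        HasDerivAt ψ (ω i) t)
    (s : ℝ) (hs : 0 < s)
    (xs₁ xs₂ ψs : ℝ → ℝ)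
    (hxs₁c : Continuous xs₁) (hxs₂c : Continuous xs₂) (hψsc : Continuous ψs)
    (hsinit : (xs₁ 0, xs₂ 0, ψs 0) = x₀)
    (hsode : ∀ i : Fin (N + 1), ∀ t ∈ Set.Ioo (τ i.castSucc / s) (τ i.succ / s),
        HasDerivAt xs₁ (s * v i * Real.cos (ψs t)) t ∧
        HasDerivAt xs₂ (s * v i * Real.sin (ψs t)) t ∧
        HasDerivAt ψs (s * ω i) t) :
    ∀ t ∈ Set.Icc (0 : ℝ) (τ (Fin.last (N + 1)) / s),
      (xs₁ t, xs₂ t, ψs t) = (x₁ (s * t), x₂ (s * t), ψ (s * t)) := by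
  have hτs : Monotone (τ · / s) := fun i j hij =>
    div_le_div_of_nonneg_right (hτmono.monotone hij) hs.le
  have hscale : Continuous (s * ·) := continuous_const_mul s
  have hglued := eqOn_Icc_last_of_eqOn_Icc_succ hτs
    (f := fun t => (xs₁ t, xs₂ t, ψs t)) (g := fun t => (x₁ (s * t), x₂ (s * t), ψ (s * t)))
    (by simp [hτ0, hsinit, hinit]) fun i hleft => by
      have hrep := IsUnicycleOn.comp_const_mul (hode i) s
      rw [preimage_const_mul_Ioo₀ _ _ hs] at hrep
      exact IsUnicycleOn.eqOn_Icc (hsode i) hrep hxs₁c.continuousOn hxs₂c.continuousOn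
        hψsc.continuousOn (hx₁c.comp hscale).continuousOn (hx₂c.comp hscale).continuousOn
        (hψc.comp hscale).continuousOn hleft
  simpa only [hτ0, zero_div, EqOn] using hglued
end

section
/- Under the hypotheses of the scaling theorem (piecewise-constant-velocity unicycle trajectory x with switch times 0 = τ₀ < ... < τ_{N+1}, and scaled trajectory x_s obtained with velocities (s·vᵢ, s·ωᵢ) on intervals (τᵢ/s, τᵢ₊₁/s) and x_s(0) = x(0)), suppose additionally: Δ > 0, t_c ∈ (0, τ_{N+1}] is such that the position (x₁(t), x₂(t)) lies in a set F ⊆ ℝ² for all t ∈ [0, t_c), and s = α·t_c/Δ for some α with 0 < α < 1. Then the position of the scaled trajectory (x_{s,1}(t), x_{s,2}(t)) lies in F for all t ∈ [0, Δ]. -/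
/-!
On `[0, τ_{N+1}/s]` the scaled trajectory is the time rescaling `t ↦ x(s t)` of the original one.
Both headings have derivative `s ωᵢ` on the `i`-th piece, so their difference is continuous and
piecewise constant, hence zero; once the headings agree, the same argument applies to the
positions. Finally `s Δ = α t_c < t_c`, so for `t ∈ [0, Δ]` the rescaled time `s t` lies in
`[0, t_c)`, where the original trajectory is collision-free.
-/

open Set

lemma eq_of_hasDerivAt_zero_on_Ioo {f : ℝ → ℝ} {a b : ℝ} (hab : a ≤ b)
    (hf : ContinuousOn f (Icc a b)) (hf' : ∀ t ∈ Ioo a b, HasDerivAt f 0 t) : f b = f a := by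
  rcases hab.eq_or_lt with rfl | hlt
  · rfl
  obtain ⟨_, _, hslope⟩ := exists_hasDerivAt_eq_slope f (fun _ => 0) hlt hf hf'
  rw [eq_comm, div_eq_zero_iff, sub_eq_zero, sub_eq_zero] at hslope
  exact hslope.resolve_right hlt.ne'

lemma eq_left_of_hasDerivAt_zero_piecewise {n : ℕ} {a : Fin (n + 1) → ℝ} (ha : Monotone a)
    {f : ℝ → ℝ} (hf : Continuous f)
    (hf' : ∀ i : Fin n, ∀ t ∈ Ioo (a i.castSucc) (a i.succ), HasDerivAt f 0 t) :
    ∀ t ∈ Icc (a 0) (a (Fin.last n)), f t = f (a 0) := by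
  suffices ∀ i : Fin (n + 1), ∀ t ∈ Icc (a 0) (a i), f t = f (a 0) from this _
  intro i
  induction i using Fin.induction with
  | zero => intro t ht; rw [le_antisymm ht.2 ht.1]
  | succ i ih =>
    intro t ht
    rcases le_or_gt t (a i.castSucc) with hle | hgt
    · exact ih t ⟨ht.1, hle⟩
    · have hpiece : f t = f (a i.castSucc) :=
        eq_of_hasDerivAt_zero_on_Ioo hgt.le hf.continuousOn
          fun u hu => hf' i u ⟨hu.1, hu.2.trans_le ht.2⟩
      rw [hpiece]
      exact ih _ ⟨ha (Fin.zero_le _), le_rfl⟩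

lemma eq_comp_mul_of_hasDerivAt_piecewise {n : ℕ} {a : Fin (n + 1) → ℝ} (ha : Monotone a)
    {s : ℝ} (hs : 0 < s) {f g : ℝ → ℝ} (hf : Continuous f) (hg : Continuous g)
    {f' : Fin n → ℝ → ℝ}
    (hf' : ∀ i, ∀ t ∈ Ioo (a i.castSucc) (a i.succ), HasDerivAt f (f' i t) t)
    (hg' : ∀ i, ∀ t ∈ Ioo (a i.castSucc / s) (a i.succ / s),
      HasDerivAt g (s * f' i (s * t)) t)
    (h0 : g (a 0 / s) = f (a 0)) :
    ∀ t ∈ Icc (a 0 / s) (a (Fin.last n) / s), g t = f (s * t) := by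
  have hdiff : ∀ i : Fin n, ∀ t ∈ Ioo (a i.castSucc / s) (a i.succ / s),
      HasDerivAt (fun u => g u - f (s * u)) 0 t := by
    intro i t ht
    have hst : s * t ∈ Ioo (a i.castSucc) (a i.succ) :=
      ⟨by rw [mul_comm]; exact (div_lt_iff₀ hs).mp ht.1,
        by rw [mul_comm]; exact (lt_div_iff₀ hs).mp ht.2⟩
    have hcomp := (hf' i (s * t) hst).comp t ((hasDerivAt_id t).const_mul s)
    exact ((hg' i t ht).sub hcomp).congr_deriv (by simp [mul_comm])
  intro t ht
  have hconst :=
    eq_left_of_hasDerivAt_zero_piecewise (ha.div_const hs.le) (by fun_prop) hdiff t ht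
  rwa [mul_div_cancel₀ _ hs.ne', h0, sub_self, sub_eq_zero] at hconst

theorem unicycle_scaled_eq_comp_mul {N : ℕ} {τ : Fin (N + 2) → ℝ} (hτ0 : τ 0 = 0)
    (hτ : Monotone τ) {v ω : Fin (N + 1) → ℝ} {x₁ x₂ ψ xs₁ xs₂ ψs : ℝ → ℝ}
    (hx₁c : Continuous x₁) (hx₂c : Continuous x₂) (hψc : Continuous ψ)
    (hxs₁c : Continuous xs₁) (hxs₂c : Continuous xs₂) (hψsc : Continuous ψs)
    (hinit : (xs₁ 0, xs₂ 0, ψs 0) = (x₁ 0, x₂ 0, ψ 0))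
    (hode : ∀ i : Fin (N + 1), ∀ t ∈ Ioo (τ i.castSucc) (τ i.succ),
        HasDerivAt x₁ (v i * Real.cos (ψ t)) t ∧
        HasDerivAt x₂ (v i * Real.sin (ψ t)) t ∧
        HasDerivAt ψ (ω i) t)
    {s : ℝ} (hs : 0 < s)
    (hsode : ∀ i : Fin (N + 1), ∀ t ∈ Ioo (τ i.castSucc / s) (τ i.succ / s),
        HasDerivAt xs₁ (s * v i * Real.cos (ψs t)) t ∧
        HasDerivAt xs₂ (s * v i * Real.sin (ψs t)) t ∧
        HasDerivAt ψs (s * ω i) t) :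
    ∀ t ∈ Icc 0 (τ (Fin.last (N + 1)) / s),
      xs₁ t = x₁ (s * t) ∧ xs₂ t = x₂ (s * t) := by
  have hstart : τ 0 / s = 0 := by rw [hτ0, zero_div]
  obtain ⟨hx₁0, hx₂0, hψ0⟩ : xs₁ (τ 0 / s) = x₁ (τ 0) ∧
      xs₂ (τ 0 / s) = x₂ (τ 0) ∧ ψs (τ 0 / s) = ψ (τ 0) := by
    simpa only [hτ0, zero_div, Prod.mk.injEq] using hinit
  have hψ : ∀ t ∈ Icc (τ 0 / s) (τ (Fin.last _) / s), ψs t = ψ (s * t) :=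
    eq_comp_mul_of_hasDerivAt_piecewise (f' := fun i _ => ω i) hτ hs hψc hψsc
      (fun i t ht => (hode i t ht).2.2) (fun i t ht => (hsode i t ht).2.2) hψ0
  have hpiece : ∀ i : Fin (N + 1),
      Ioo (τ i.castSucc / s) (τ i.succ / s) ⊆ Icc (τ 0 / s) (τ (Fin.last _) / s) := fun i =>
    Ioo_subset_Icc_self.trans <| Icc_subset_Icc
      (by gcongr; exact hτ (Fin.zero_le _)) (by gcongr; exact hτ (Fin.le_last _))
  have hx₁ := eq_comp_mul_of_hasDerivAt_piecewise
    (f' := fun i u => v i * Real.cos (ψ u)) hτ hs hx₁c hxs₁c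
    (fun i t ht => (hode i t ht).1)
    (fun i t ht => (hsode i t ht).1.congr_deriv (by rw [hψ t (hpiece i ht)]; ring)) hx₁0
  have hx₂ := eq_comp_mul_of_hasDerivAt_piecewise
    (f' := fun i u => v i * Real.sin (ψ u)) hτ hs hx₂c hxs₂c
    (fun i t ht => (hode i t ht).2.1)
    (fun i t ht => (hsode i t ht).2.1.congr_deriv (by rw [hψ t (hpiece i ht)]; ring)) hx₂0
  rw [hstart] at hx₁ hx₂
  exact fun t ht => ⟨hx₁ t ht, hx₂ t ht⟩

/-- Theorem 5 of the paper, second conclusion: if the original trajectory is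
collision-free (positions in `F`) on `[0, t_c)` and the velocities are scaled
by `s = α·t_c/Δ` with `0 < α < 1`, then the scaled trajectory is
collision-free on the whole horizon `[0, Δ]`. -/
theorem unicycle_scaled_trajectory_collision_free
    (N : ℕ) (τ : Fin (N + 2) → ℝ) (hτ0 : τ 0 = 0) (hτmono : StrictMono τ)
    (v ω : Fin (N + 1) → ℝ)
    (x₀ : ℝ × ℝ × ℝ)
    (x₁ x₂ ψ : ℝ → ℝ)
    (hx₁c : Continuous x₁) (hx₂c : Continuous x₂) (hψc : Continuous ψ)
    (hinit : (x₁ 0, x₂ 0, ψ 0) = x₀)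
    (hode : ∀ i : Fin (N + 1), ∀ t ∈ Set.Ioo (τ i.castSucc) (τ i.succ),
        HasDerivAt x₁ (v i * Real.cos (ψ t)) t ∧
        HasDerivAt x₂ (v i * Real.sin (ψ t)) t ∧
        HasDerivAt ψ (ω i) t)
    (Δ t_c α s : ℝ) (hΔ : 0 < Δ)
    (ht_c : t_c ∈ Set.Ioc (0 : ℝ) (τ (Fin.last (N + 1))))
    (hα : 0 < α) (hα1 : α < 1) (hsval : s = α * t_c / Δ)
    (F : Set (ℝ × ℝ))
    (hfree : ∀ t ∈ Set.Ico (0 : ℝ) t_c, (x₁ t, x₂ t) ∈ F)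
    (xs₁ xs₂ ψs : ℝ → ℝ)
    (hxs₁c : Continuous xs₁) (hxs₂c : Continuous xs₂) (hψsc : Continuous ψs)
    (hsinit : (xs₁ 0, xs₂ 0, ψs 0) = x₀)
    (hsode : ∀ i : Fin (N + 1), ∀ t ∈ Set.Ioo (τ i.castSucc / s) (τ i.succ / s),
        HasDerivAt xs₁ (s * v i * Real.cos (ψs t)) t ∧
        HasDerivAt xs₂ (s * v i * Real.sin (ψs t)) t ∧
        HasDerivAt ψs (s * ω i) t) :
    ∀ t ∈ Set.Icc (0 : ℝ) Δ, (xs₁ t, xs₂ t) ∈ F := by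
  have hs : 0 < s := by
    rw [hsval]
    exact div_pos (mul_pos hα ht_c.1) hΔ
  have hrescaled := unicycle_scaled_eq_comp_mul hτ0 hτmono.monotone hx₁c hx₂c hψc
    hxs₁c hxs₂c hψsc (hsinit.trans hinit.symm) hode hs hsode
  intro t ht
  have hst : s * t < t_c :=
    calc s * t ≤ s * Δ := mul_le_mul_of_nonneg_left ht.2 hs.le
      _ = α * t_c := by rw [hsval]; field_simp
      _ < t_c := mul_lt_of_lt_one_left ht_c.1 hα1
  have htτ : t ≤ τ (Fin.last (N + 1)) / s := by
    rw [le_div_iff₀ hs, mul_comm]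
    exact hst.le.trans ht_c.2
  obtain ⟨hx₁, hx₂⟩ := hrescaled t ⟨ht.1, htτ⟩
  rw [hx₁, hx₂]
  exact hfree _ ⟨mul_nonneg hs.le ht.1, hst⟩
end
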